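/- arXiv:1705.04014 — 2 statements merged into one kernel-verified Lean document; each statement's English description precedes it below -/
import Mathlib

section
/- For all x > 0, the exponential integral satisfies the bound E₁(x) ≤ e^{-x} · log(1 + 1/x). -/
/-!
Put `G(t) = e^{-t} log(1 + 1/t)`. Then `-G'(t) = e^{-t} (log(1 + 1/t) + 1/(t(t+1)))`, and since
`log(1 + 1/t) ≥ 1/(t+1)` while `1/t = 1/(t+1) + 1/(t(t+1))`, this dominates the integrand
`e^{-t}/t` of `E₁`. As `G → 0` at infinity, integrating over `(x, ∞)` gives `E₁(x) ≤ G(x)`.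
-/

open MeasureTheory Real Set Filter

/-- The exponential integral `E₁(x) = ∫_x^∞ e^{-t}/t dt`. -/
noncomputable def expIntegralE1 (x : ℝ) : ℝ := ∫ t in Set.Ioi x, Real.exp (-t) / t

theorem setIntegral_Ioi_le_of_hasDerivAt_of_le {f g g' : ℝ → ℝ} {a l : ℝ}
    (hcont : ContinuousWithinAt g (Ici a) a) (hderiv : ∀ t ∈ Ioi a, HasDerivAt g (g' t) t)
    (hf_nonneg : ∀ t ∈ Ioi a, 0 ≤ f t) (hf_le : ∀ t ∈ Ioi a, f t ≤ g' t)
    (hg : Tendsto g atTop (nhds l)) :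
    ∫ t in Ioi a, f t ≤ l - g a := by
  have hg'_nonneg : ∀ t ∈ Ioi a, 0 ≤ g' t := fun t ht => (hf_nonneg t ht).trans (hf_le t ht)
  rw [← integral_Ioi_of_hasDerivAt_of_nonneg hcont hderiv hg'_nonneg hg]
  exact integral_mono_of_nonneg
    ((ae_restrict_iff' measurableSet_Ioi).2 (.of_forall hf_nonneg))
    (integrableOn_Ioi_deriv_of_nonneg hcont hderiv hg'_nonneg hg)
    ((ae_restrict_iff' measurableSet_Ioi).2 (.of_forall hf_le))

theorem Real.inv_add_one_le_log_one_add_inv {t : ℝ} (ht : 0 < t) :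
    (t + 1)⁻¹ ≤ log (1 + t⁻¹) := by
  have h := one_sub_inv_le_log_of_pos (by positivity : 0 < 1 + t⁻¹)
  have hsimp : 1 - (1 + t⁻¹)⁻¹ = (t + 1)⁻¹ := by field_simp; ring
  rwa [hsimp] at h

theorem hasDerivAt_exp_neg_mul_log_one_add_inv {t : ℝ} (ht : 0 < t) :
    HasDerivAt (fun s => exp (-s) * log (1 + s⁻¹))
      (-(exp (-t) * (log (1 + t⁻¹) + (t * (t + 1))⁻¹))) t := by
  have hexp : HasDerivAt (fun s => exp (-s)) (-exp (-t)) t := by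
    simpa using (hasDerivAt_neg t).exp
  have hlog : HasDerivAt (fun s => log (1 + s⁻¹)) (-(t ^ 2)⁻¹ / (1 + t⁻¹)) t :=
    ((hasDerivAt_inv ht.ne').const_add 1).log (by positivity)
  refine (hexp.mul hlog).congr_deriv ?_
  have : t + 1 ≠ 0 := by positivity
  field_simp
  ring

theorem tendsto_exp_neg_mul_log_one_add_inv_atTop :
    Tendsto (fun s => exp (-s) * log (1 + s⁻¹)) atTop (nhds 0) := by
  have hexp : Tendsto (fun s : ℝ => exp (-s)) atTop (nhds 0) :=
    tendsto_exp_atBot.comp tendsto_neg_atTop_atBot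
  have hlog : Tendsto (fun s : ℝ => log (1 + s⁻¹)) atTop (nhds 0) := by
    have h := (tendsto_inv_atTop_zero (𝕜 := ℝ)).const_add 1
    rw [add_zero] at h
    simpa only [log_one] using h.log one_ne_zero
  simpa using hexp.mul hlog

theorem exp_neg_div_le_exp_neg_mul_log_add {t : ℝ} (ht : 0 < t) :
    exp (-t) / t ≤ exp (-t) * (log (1 + t⁻¹) + (t * (t + 1))⁻¹) := by
  have hsplit : t⁻¹ = (t + 1)⁻¹ + (t * (t + 1))⁻¹ := by field_simp
  rw [div_eq_mul_inv]
  nth_rw 1 [hsplit]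
  gcongr
  exact inv_add_one_le_log_one_add_inv ht

/-- For `x > 0`, `E₁(x) ≤ e^{-x} · log(1 + 1/x)`. -/
theorem E1_le_exp_neg_mul_log (x : ℝ) (hx : 0 < x) :
    expIntegralE1 x ≤ Real.exp (-x) * Real.log (1 + 1 / x) := by
  have hderiv (t : ℝ) (ht : 0 < t) := (hasDerivAt_exp_neg_mul_log_one_add_inv ht).neg
  have hbound := setIntegral_Ioi_le_of_hasDerivAt_of_le (a := x) (f := fun t => exp (-t) / t)
    (hderiv x hx).continuousAt.continuousWithinAt
    (fun t ht => hderiv t (hx.trans ht))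
    (fun t ht => (div_pos (exp_pos _) (hx.trans ht)).le)
    (fun t ht => by simpa using exp_neg_div_le_exp_neg_mul_log_add (hx.trans ht))
    tendsto_exp_neg_mul_log_one_add_inv_atTop.neg
  simpa [expIntegralE1] using hbound
end

section
/- Let b, γ > 0 and R_B > 0 with R̄_B = R_B·log 2, and suppose (R̄_B/(bγ))·e^{R̄_B(1 − 1/(bγ))} ≤ 1/e. Then α = (−(1/R̄_B)W(−(R̄_B/(bγ))e^{R̄_B(1−1/(bγ))}) − 1/(bγ)) / (1 − (1/R̄_B)W(−(R̄_B/(bγ))e^{R̄_B(1−1/(bγ))}) − 1/(bγ)) satisfies the equation (1−α)·log₂(1 + (α/(1−α))·bγ) = R_B, where W is a branch of the Lambert W function. -/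
open Real

/-!
Put `u = -w/R̄_B - 1/(bγ)`, so that `α = u/(u+1)`, `1 - α = 1/(u+1)` and `α/(1-α) = u`.
Dividing the Lambert equation `w e^w = -(R̄_B/(bγ)) e^{R̄_B(1-1/(bγ))}` by `e^w` gives
`1 + bγ u = -bγ w/R̄_B = e^{R̄_B(u+1)}`, i.e. `log₂(1 + bγ u) = R_B (u+1)`,
and dividing by `u + 1` is exactly the rate equation.
-/

lemma eq_mul_exp_sub_of_mul_exp_eq {w c a : ℝ} (h : w * exp w = c * exp a) :
    w = c * exp (a - w) := by
  rw [exp_sub, ← mul_div_assoc, ← h]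
  field_simp

lemma one_add_mul_eq_exp_of_mul_exp_eq {R g w : ℝ} (hR : R ≠ 0) (hg : g ≠ 0)
    (hw : w * exp w = -(R / g) * exp (R * (1 - 1 / g))) :
    1 + g * (-(1 / R) * w - 1 / g) = exp (R * (-(1 / R) * w - 1 / g + 1)) := by
  calc 1 + g * (-(1 / R) * w - 1 / g) = -(g / R) * w := by field_simp; ring
    _ = exp (R * (1 - 1 / g) - w) := by
      conv_lhs => rw [eq_mul_exp_sub_of_mul_exp_eq hw]
      field_simp
    _ = exp (R * (-(1 / R) * w - 1 / g + 1)) := by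
      congr 1
      field_simp
      ring

lemma add_one_ne_zero_of_one_add_mul_eq_exp {R g u : ℝ} (hg : g ≠ 0)
    (h : 1 + g * u = exp (R * (u + 1))) : u + 1 ≠ 0 := by
  intro hu
  rw [hu, mul_zero, exp_zero, eq_neg_of_add_eq_zero_left hu] at h
  exact hg (by linarith)

lemma one_sub_div_add_one_mul_logb {u : ℝ} (hu : u + 1 ≠ 0) (c x : ℝ) :
    (1 - u / (u + 1)) * logb c (1 + u / (u + 1) / (1 - u / (u + 1)) * x)
      = logb c (1 + u * x) / (u + 1) := by
  have hsub : 1 - u / (u + 1) = 1 / (u + 1) := by field_simp; ring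
  rw [hsub, div_div_div_cancel_right₀ hu, div_one]
  ring

theorem ts_parameter_closed_form_general (b γ RB : ℝ) (hb : 0 < b) (hγ : 0 < γ)
    (hRB : 0 < RB)
    (RBbar : ℝ) (hRBbar : RBbar = RB * Real.log 2)
    (w : ℝ)
    (hw : w * Real.exp w = -(RBbar / (b * γ)) * Real.exp (RBbar * (1 - 1 / (b * γ))))
    (α : ℝ)
    (hα : α = (-(1 / RBbar) * w - 1 / (b * γ)) /
        (1 - (1 / RBbar) * w - 1 / (b * γ))) :
    (1 - α) * Real.logb 2 (1 + α / (1 - α) * (b * γ)) = RB := by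
  have hlog2 : log 2 ≠ 0 := (log_pos one_lt_two).ne'
  have hR : RBbar ≠ 0 := hRBbar ▸ mul_ne_zero hRB.ne' hlog2
  have hg : b * γ ≠ 0 := (mul_pos hb hγ).ne'
  set u := -(1 / RBbar) * w - 1 / (b * γ)
  have hrate : 1 + b * γ * u = exp (RBbar * (u + 1)) :=
    one_add_mul_eq_exp_of_mul_exp_eq hR hg hw
  have hu : u + 1 ≠ 0 := add_one_ne_zero_of_one_add_mul_eq_exp hg hrate
  obtain rfl : α = u / (u + 1) := by rw [hα]; ring
  rw [one_sub_div_add_one_mul_logb hu, mul_comm u, hrate, logb, log_exp, hRBbar]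
  field_simp

/-- Closed-form solution of the time-splitting parameter under zero forcing:
if `w = W(−(R̄_B/(bγ))e^{R̄_B(1−1/(bγ))})` for a Lambert-W branch `W`
(i.e. `w·e^w` equals that argument), then
`α = (−w/R̄_B − 1/(bγ))/(1 − w/R̄_B − 1/(bγ))` satisfies
`(1−α)·log₂(1 + (α/(1−α))·bγ) = R_B`. -/
theorem ts_parameter_closed_form (b γ RB : ℝ) (hb : 0 < b) (hγ : 0 < γ)
    (hRB : 0 < RB)
    (RBbar : ℝ) (hRBbar : RBbar = RB * Real.log 2)
    (hfeas : RBbar / (b * γ) * Real.exp (RBbar * (1 - 1 / (b * γ)))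
        ≤ 1 / Real.exp 1)
    (w : ℝ)
    (hw : w * Real.exp w = -(RBbar / (b * γ)) * Real.exp (RBbar * (1 - 1 / (b * γ))))
    (α : ℝ)
    (hα : α = (-(1 / RBbar) * w - 1 / (b * γ)) /
        (1 - (1 / RBbar) * w - 1 / (b * γ))) :
    (1 - α) * Real.logb 2 (1 + α / (1 - α) * (b * γ)) = RB :=
  ts_parameter_closed_form_general b γ RB hb hγ hRB RBbar hRBbar w hw α hα
end
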